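/- Let H be a real Hilbert space, let f_1,…,f_k : H → ℝ be locally Lipschitz near every point of H, let x ∈ H, ε > 0 and c ∈ (0,1). Let Ξ = {w_1,…,w_m} ⊆ F_ε(x) be a finite set, and let ṽ ∈ H with −ṽ ∈ convexHull(Ξ) and ‖ṽ‖ ≤ ‖w‖ for all w ∈ convexHull(Ξ) (i.e., up to sign, ṽ is the minimal-norm element of −convexHull(Ξ)), and assume ṽ ≠ 0. If f_i(x + (ε/‖ṽ‖)·ṽ) > f_i(x) − c·ε·‖ṽ‖ for some i ∈ {1,…,k}, then there exist t' ∈ (0, ε/‖ṽ‖] and w' ∈ ∂f_i(x + t'·ṽ) such that ⟨ṽ, w'⟩ > −c·‖ṽ‖². In particular, w' ∈ F_ε(x) and w' ∉ convexHull(Ξ). -/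

import Mathlib

/-!
Suppose no Clarke subgradient `w` at the points `x + t ṽ`, `0 < t ≤ ε / ‖ṽ‖`, passes the angle
test, i.e. `⟪ṽ, w⟫ ≤ -c ‖ṽ‖²` for all of them. By Hahn–Banach applied to the sublinear function
`f°(y; ·)`, the Clarke derivative `f°(y; ṽ)` is attained by a subgradient, so the right Dini
derivative of `t ↦ fᵢ (x + t ṽ)` is at most `-c ‖ṽ‖²` on the segment, and a mean value inequality
yields the sufficient decrease `fᵢ (x + (ε / ‖ṽ‖) ṽ) ≤ fᵢ x - c ε ‖ṽ‖`. The subgradient obtained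
lies in `F_ε(x)` because `‖t ṽ‖ ≤ ε`, and outside `conv Ξ` because `-ṽ` is the least-norm point of
`conv Ξ`, so that `‖ṽ‖² ≤ ⟪-ṽ, w⟫` on `conv Ξ`, which is incompatible with `c < 1`.
-/

open Filter Topology RealInnerProductSpace

/-- Clarke generalized directional derivative
`f°(x;v) = limsup_{y→x, t↓0} (f(y+tv) − f(y))/t`. -/
noncomputable def clarkeDir {H : Type*} [NormedAddCommGroup H] [InnerProductSpace ℝ H]
    (f : H → ℝ) (x v : H) : ℝ :=
  limsup (fun p : H × ℝ => (f (p.1 + p.2 • v) - f p.1) / p.2)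
    ((𝓝 x) ×ˢ (𝓝[>] (0 : ℝ)))

/-- Clarke subdifferential, with the dual of `H` identified with `H` via the Riesz map:
`∂f(x) = {w : ⟪w, v⟫ ≤ f°(x;v) for all v}`. -/
def clarkeSubdiff {H : Type*} [NormedAddCommGroup H] [InnerProductSpace ℝ H]
    (f : H → ℝ) (x : H) : Set H :=
  {w : H | ∀ v : H, ⟪w, v⟫ ≤ clarkeDir f x v}

/-- Goldstein ε-subdifferential
`∂_ε f(x) = closure (convexHull (⋃_{y ∈ closedBall x ε} ∂f(y)))`. -/
def goldsteinSubdiff {H : Type*} [NormedAddCommGroup H] [InnerProductSpace ℝ H]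
    (f : H → ℝ) (ε : ℝ) (x : H) : Set H :=
  closure (convexHull ℝ (⋃ y ∈ Metric.closedBall x ε, clarkeSubdiff f y))

/-- `f` is locally Lipschitz near `x`: Lipschitz on some open ball around `x`. -/
def LocallyLipschitzNear {H : Type*} [NormedAddCommGroup H]
    (f : H → ℝ) (x : H) : Prop :=
  ∃ ε > 0, ∃ L : NNReal, LipschitzOnWith L f (Metric.ball x ε)

/-- Multiobjective ε-subdifferential `F_ε(x) = closure (convexHull (⋃ i, ∂_ε f_i(x)))`. -/
def multiSubdiff {H : Type*} [NormedAddCommGroup H] [InnerProductSpace ℝ H]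
    {k : ℕ} (f : Fin k → H → ℝ) (ε : ℝ) (x : H) : Set H :=
  closure (convexHull ℝ (⋃ i : Fin k, goldsteinSubdiff (f i) ε x))

/-- The weak topology on `H`: the topology induced by the functionals `⟪·, v⟫`, `v : H`. -/
noncomputable def weakTopology (H : Type*) [NormedAddCommGroup H] [InnerProductSpace ℝ H] :
    TopologicalSpace H :=
  ⨅ v : H, TopologicalSpace.induced (fun x : H => ⟪x, v⟫) inferInstance

section

open Set

namespace Filter

variable {α : Type*} {F : Filter α} {u : α → ℝ} {B : ℝ}

lemma isBoundedUnder_le_of_eventually_abs_le (h : ∀ᶠ a in F, |u a| ≤ B) :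
    F.IsBoundedUnder (· ≤ ·) u :=
  isBoundedUnder_of_eventually_le (h.mono fun _ h => (abs_le.1 h).2)

lemma isBoundedUnder_ge_of_eventually_abs_le (h : ∀ᶠ a in F, |u a| ≤ B) :
    F.IsBoundedUnder (· ≥ ·) u :=
  isBoundedUnder_of_eventually_ge (h.mono fun _ h => (abs_le.1 h).1)

lemma isCoboundedUnder_le_of_eventually_abs_le [F.NeBot] (h : ∀ᶠ a in F, |u a| ≤ B) :
    F.IsCoboundedUnder (· ≤ ·) u :=
  (isBoundedUnder_ge_of_eventually_abs_le h).isCoboundedUnder_le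

end Filter

lemma map_scale_nhds_prod_nhdsGT {X : Type*} [TopologicalSpace X] (y : X) {t : ℝ} (ht : 0 < t) :
    map (fun p : X × ℝ => (p.1, t * p.2)) (𝓝 y ×ˢ 𝓝[>] 0) = 𝓝 y ×ˢ 𝓝[>] 0 := by
  have scale {t : ℝ} (ht : 0 < t) : Tendsto (fun p : X × ℝ => (p.1, t * p.2))
      (𝓝 y ×ˢ 𝓝[>] 0) (𝓝 y ×ˢ 𝓝[>] 0) :=
    tendsto_fst.prodMk ((tendsto_iff_comap.2 (comap_mulLeft_nhdsGT_zero ht).ge).comp tendsto_snd)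
  refine map_eq_of_inverse (fun p => (p.1, t⁻¹ * p.2)) ?_ (scale ht) (scale (inv_pos.2 ht))
  funext p
  simp [ht.ne']

section NormedSpace

variable {E : Type*} [NormedAddCommGroup E] [NormedSpace ℝ E]

noncomputable def clarkeQuotient (f : E → ℝ) (v : E) (p : E × ℝ) : ℝ :=
  (f (p.1 + p.2 • v) - f p.1) / p.2

lemma tendsto_fst_add_snd_smul (y v : E) :
    Tendsto (fun p : E × ℝ => p.1 + p.2 • v) (𝓝 y ×ˢ 𝓝[>] 0) (𝓝 y) := by
  simpa using (tendsto_fst (g := 𝓝[>] (0 : ℝ))).add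
    ((tendsto_snd.mono_right nhdsWithin_le_nhds).smul_const v)

lemma map_shear_nhds_prod_nhdsGT (y w : E) :
    map (fun p : E × ℝ => (p.1 + p.2 • w, p.2)) (𝓝 y ×ˢ 𝓝[>] 0) = 𝓝 y ×ˢ 𝓝[>] 0 := by
  have shear (w : E) : Tendsto (fun p : E × ℝ => (p.1 + p.2 • w, p.2))
      (𝓝 y ×ˢ 𝓝[>] 0) (𝓝 y ×ˢ 𝓝[>] 0) :=
    (tendsto_fst_add_snd_smul y w).prodMk tendsto_snd
  refine map_eq_of_inverse (fun p => (p.1 + p.2 • -w, p.2)) ?_ (shear w) (shear (-w))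
  funext p
  simp

lemma LocallyLipschitzNear.exists_eventually_abs_clarkeQuotient_le {f : E → ℝ} {y : E}
    (hf : LocallyLipschitzNear f y) :
    ∃ L : ℝ, ∀ v, ∀ᶠ p in 𝓝 y ×ˢ 𝓝[>] 0, |clarkeQuotient f v p| ≤ L * ‖v‖ := by
  obtain ⟨δ, hδ, L, hL⟩ := hf
  refine ⟨L, fun v => ?_⟩
  have hball := Metric.ball_mem_nhds y hδ
  filter_upwards [tendsto_fst.eventually hball, (tendsto_fst_add_snd_smul y v).eventually hball,
    tendsto_snd.eventually (self_mem_nhdsWithin (s := Ioi (0 : ℝ)))] with p hp hpv hp0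
  have hdist : dist (p.1 + p.2 • v) p.1 = p.2 * ‖v‖ := by
    rw [dist_self_add_left, norm_smul, Real.norm_of_nonneg (le_of_lt hp0)]
  rw [clarkeQuotient, abs_div, abs_of_pos hp0, div_le_iff₀ hp0, ← Real.dist_eq]
  calc dist (f (p.1 + p.2 • v)) (f p.1) ≤ L * dist (p.1 + p.2 • v) p.1 := hL.dist_le_mul _ hpv _ hp
    _ = L * ‖v‖ * p.2 := by rw [hdist]; ring

end NormedSpace

variable {H : Type*} [NormedAddCommGroup H] [InnerProductSpace ℝ H]

lemma clarkeDir_eq_limsup (f : H → ℝ) (y v : H) :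
    clarkeDir f y v = limsup (clarkeQuotient f v) (𝓝 y ×ˢ 𝓝[>] 0) := rfl

@[simp]
lemma clarkeDir_zero (f : H → ℝ) (y : H) : clarkeDir f y 0 = 0 := by
  have : clarkeQuotient f (0 : H) = fun _ => 0 := by
    funext p
    simp [clarkeQuotient]
  rw [clarkeDir_eq_limsup, this, limsup_const]

namespace LocallyLipschitzNear

variable {f : H → ℝ} {y : H}

lemma exists_clarkeDir_le (hf : LocallyLipschitzNear f y) :
    ∃ L : ℝ, ∀ v, clarkeDir f y v ≤ L * ‖v‖ := by
  obtain ⟨L, hL⟩ := hf.exists_eventually_abs_clarkeQuotient_le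
  exact ⟨L, fun v => limsup_le_of_le (isCoboundedUnder_le_of_eventually_abs_le (hL v))
    ((hL v).mono fun _ h => (abs_le.1 h).2)⟩

lemma clarkeDir_add_le (hf : LocallyLipschitzNear f y) (v w : H) :
    clarkeDir f y (v + w) ≤ clarkeDir f y v + clarkeDir f y w := by
  obtain ⟨L, hL⟩ := hf.exists_eventually_abs_clarkeQuotient_le
  set ψ := fun p : H × ℝ => (p.1 + p.2 • w, p.2)
  have hψ := map_shear_nhds_prod_nhdsGT y w
  have hsplit : clarkeQuotient f (v + w) = clarkeQuotient f v ∘ ψ + clarkeQuotient f w := by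
    funext p
    simp only [clarkeQuotient, ψ, Function.comp_apply, Pi.add_apply]
    rw [smul_add, ← add_assoc, add_right_comm]
    ring
  have hv := (tendsto_map.mono_right hψ.le).eventually (hL v)
  rw [clarkeDir_eq_limsup, hsplit]
  calc limsup (clarkeQuotient f v ∘ ψ + clarkeQuotient f w) (𝓝 y ×ˢ 𝓝[>] 0)
      ≤ limsup (clarkeQuotient f v ∘ ψ) (𝓝 y ×ˢ 𝓝[>] 0)
        + limsup (clarkeQuotient f w) (𝓝 y ×ˢ 𝓝[>] 0) :=
        limsup_add_le (isBoundedUnder_ge_of_eventually_abs_le hv)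
          (isBoundedUnder_le_of_eventually_abs_le hv)
          (isCoboundedUnder_le_of_eventually_abs_le (hL w))
          (isBoundedUnder_le_of_eventually_abs_le (hL w))
    _ = clarkeDir f y v + clarkeDir f y w := by rw [limsup_comp, hψ]; rfl

lemma clarkeDir_smul (hf : LocallyLipschitzNear f y) {t : ℝ} (ht : 0 < t) (v : H) :
    clarkeDir f y (t • v) = t * clarkeDir f y v := by
  obtain ⟨L, hL⟩ := hf.exists_eventually_abs_clarkeQuotient_le
  set σ := fun p : H × ℝ => (p.1, t * p.2)
  have hσ := map_scale_nhds_prod_nhdsGT y ht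
  have hscale : clarkeQuotient f (t • v) = (t * ·) ∘ (clarkeQuotient f v ∘ σ) := by
    funext p
    simp only [clarkeQuotient, σ, Function.comp_apply, smul_smul]
    field_simp
  have hv := (tendsto_map.mono_right hσ.le).eventually (hL v)
  rw [clarkeDir_eq_limsup, clarkeDir_eq_limsup, hscale,
    ← (monotone_mul_left_of_nonneg ht.le).map_limsup_of_continuousAt (clarkeQuotient f v ∘ σ)
      (continuous_const_mul t).continuousAt (isBoundedUnder_le_of_eventually_abs_le hv)
      (isCoboundedUnder_le_of_eventually_abs_le hv), limsup_comp, hσ]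

/-- Hahn–Banach: `a • v ↦ a * f°(y; v)` on the line through `v` is dominated by the sublinear
function `f°(y; ·)`; the Lipschitz bound makes the extension continuous, and Riesz turns it into a
vector. -/
lemma exists_mem_clarkeSubdiff_inner_eq [CompleteSpace H] (hf : LocallyLipschitzNear f y)
    (v : H) : ∃ w ∈ clarkeSubdiff f y, ⟪w, v⟫ = clarkeDir f y v := by
  obtain ⟨L, hL⟩ := hf.exists_clarkeDir_le
  set N := clarkeDir f y
  have hsmul (t : ℝ) (ht : 0 < t) (u : H) : N (t • u) = t * N u := hf.clarkeDir_smul ht u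
  have hline (a : ℝ) : a * N v ≤ N (a • v) := by
    rcases lt_trichotomy a 0 with ha | rfl | ha
    · have hsum : 0 ≤ N v + N (-v) := by simpa [N] using hf.clarkeDir_add_le v (-v)
      rw [← neg_smul_neg, hsmul _ (neg_pos.2 ha)]
      nlinarith
    · simp [N]
    · exact (hsmul a ha v).ge
  let p : H →ₗ.[ℝ] ℝ := LinearPMap.mkSpanSingleton' v (N v) fun a hav => by
    rcases smul_eq_zero.1 hav with rfl | rfl <;> simp [N]
  obtain ⟨g, hgp, hgN⟩ := exists_extension_of_le_sublinear p N hsmul hf.clarkeDir_add_le (by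
    rintro ⟨z, hz⟩
    obtain ⟨a, rfl⟩ := Submodule.mem_span_singleton.1 hz
    exact (LinearPMap.mkSpanSingleton'_apply v (N v) _ a hz).trans_le (hline a))
  have hgL (u : H) : ‖g u‖ ≤ L * ‖u‖ := by
    refine abs_le.2 ⟨?_, (hgN u).trans (hL u)⟩
    have h1 := hgN (-u)
    have h2 := hL (-u)
    rw [map_neg] at h1
    rw [norm_neg] at h2
    linarith
  refine ⟨(InnerProductSpace.toDual ℝ H).symm (g.mkContinuous L hgL), fun u => ?_, ?_⟩
  · rw [InnerProductSpace.toDual_symm_apply]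
    exact hgN u
  · rw [InnerProductSpace.toDual_symm_apply, LinearMap.mkContinuous_apply]
    exact (hgp ⟨v, Submodule.mem_span_singleton_self v⟩).trans
      (LinearPMap.mkSpanSingleton'_apply_self _ _ _ _)

lemma eventually_slope_lt {x v : H} {s r : ℝ} (hf : LocallyLipschitzNear f (x + s • v))
    (hr : clarkeDir f (x + s • v) v < r) :
    ∀ᶠ z in 𝓝[>] s, slope (fun t => f (x + t • v)) s z < r := by
  obtain ⟨L, hL⟩ := hf.exists_eventually_abs_clarkeQuotient_le
  have hq := eventually_lt_of_limsup_lt hr (isBoundedUnder_le_of_eventually_abs_le (hL v))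
  have hshift : Tendsto (fun z => (x + s • v, z - s)) (𝓝[>] s) (𝓝 (x + s • v) ×ˢ 𝓝[>] 0) := by
    refine tendsto_const_nhds.prodMk (tendsto_nhdsWithin_iff.2 ⟨?_, ?_⟩)
    · exact tendsto_sub_nhds_zero_iff.2 (tendsto_id.mono_left nhdsWithin_le_nhds)
    · exact eventually_mem_nhdsWithin.mono fun z hz => Set.mem_Ioi.2 (sub_pos.2 hz)
  filter_upwards [hshift.eventually hq] with z hz
  rw [slope_def_field]
  rwa [add_assoc, ← add_smul, add_sub_cancel] at hz

end LocallyLipschitzNear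

theorem le_add_mul_sub_of_frequently_slope_lt {g : ℝ → ℝ} {a b K : ℝ} (hab : a < b)
    (hg : ContinuousOn g (Icc a b))
    (hslope : ∀ s ∈ Ioo a b, ∀ r, K < r → ∃ᶠ z in 𝓝[>] s, slope g s z < r) :
    g b ≤ g a + K * (b - a) := by
  -- the slope bound is only available on the open interval: compare on `[δ, b]`, then let `δ → a`
  have hδ : ∀ δ ∈ Ioc a b, g b ≤ g δ + K * (b - δ) := fun δ hδ =>
    image_le_of_liminf_slope_right_le_deriv_boundary (hg.mono (Icc_subset_Icc_left hδ.1.le))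
      (B := fun s => g δ + K * (s - δ)) (by simp) (by fun_prop)
      (fun s _ => by
        simpa using (((hasDerivWithinAt_id s (Ici s)).sub_const δ).const_mul K).const_add (g δ))
      (fun s hs => hslope s ⟨hδ.1.trans_le hs.1, hs.2⟩) (right_mem_Icc.2 hδ.2)
  have hcont : ContinuousWithinAt (fun δ => g δ + K * (b - δ)) (Ioc a b) a :=
    ((hg a (left_mem_Icc.2 hab.le)).mono Ioc_subset_Icc_self).add (by fun_prop)
  have := left_nhdsWithin_Ioc_neBot hab
  exact ge_of_tendsto hcont (eventually_nhdsWithin_of_forall hδ)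

lemma continuous_of_forall_locallyLipschitzNear {E : Type*} [NormedAddCommGroup E] {f : E → ℝ}
    (hf : ∀ y, LocallyLipschitzNear f y) : Continuous f :=
  continuous_iff_continuousAt.2 fun y => by
    obtain ⟨δ, hδ, L, hL⟩ := hf y
    exact hL.continuousOn.continuousAt (Metric.ball_mem_nhds y hδ)

theorem exists_mem_clarkeSubdiff_inner_gt [CompleteSpace H] {f : H → ℝ}
    (hf : ∀ y, LocallyLipschitzNear f y) {x v : H} {T K : ℝ} (hT : 0 < T)
    (hdecr : f x + K * T < f (x + T • v)) :
    ∃ t ∈ Ioc 0 T, ∃ w ∈ clarkeSubdiff f (x + t • v), K < ⟪v, w⟫ := by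
  by_contra! hle
  have hdir (t : ℝ) (ht : t ∈ Ioc 0 T) : clarkeDir f (x + t • v) v ≤ K := by
    obtain ⟨w, hw, hwv⟩ := (hf (x + t • v)).exists_mem_clarkeSubdiff_inner_eq v
    rw [← hwv, real_inner_comm]
    exact hle t ht w hw
  have hg : Continuous fun t : ℝ => f (x + t • v) :=
    (continuous_of_forall_locallyLipschitzNear hf).comp (by fun_prop)
  have hmvt := le_add_mul_sub_of_frequently_slope_lt hT hg.continuousOn fun s hs r hr =>
    ((hf _).eventually_slope_lt ((hdir s (Ioo_subset_Ioc_self hs)).trans_lt hr)).frequently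
  simp only [zero_smul, add_zero, sub_zero] at hmvt
  linarith

theorem Convex.norm_sq_le_inner_of_forall_norm_le {C : Set H} (hC : Convex ℝ C) {p : H}
    (hp : p ∈ C) (hmin : ∀ z ∈ C, ‖p‖ ≤ ‖z‖) {w : H} (hw : w ∈ C) : ‖p‖ ^ 2 ≤ ⟪p, w⟫ := by
  have : Nonempty C := ⟨⟨p, hp⟩⟩
  have hinf : ‖0 - p‖ = ⨅ z : C, ‖0 - (z : H)‖ := by
    refine le_antisymm (le_ciInf fun z => by simpa using hmin z z.2) ?_
    refine ciInf_le (f := fun z : C => ‖0 - (z : H)‖) ⟨0, ?_⟩ ⟨p, hp⟩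
    rintro _ ⟨z, rfl⟩
    exact norm_nonneg _
  have := (norm_eq_iInf_iff_real_inner_le_zero hC hp).1 hinf w hw
  rw [zero_sub, inner_neg_left, inner_sub_right, real_inner_self_eq_norm_sq] at this
  linarith

lemma clarkeSubdiff_subset_multiSubdiff {k : ℕ} (f : Fin k → H → ℝ) (i : Fin k) {ε : ℝ} {x y : H}
    (hy : y ∈ Metric.closedBall x ε) : clarkeSubdiff (f i) y ⊆ multiSubdiff f ε x := fun _ hw =>
  subset_closure <| subset_convexHull ℝ _ <| mem_iUnion.2 ⟨i,
    subset_closure <| subset_convexHull ℝ _ <| mem_biUnion hy hw⟩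

end

theorem stmt12_general {H : Type*} [NormedAddCommGroup H] [InnerProductSpace ℝ H] [CompleteSpace H]
    {k : ℕ} (f : Fin k → H → ℝ)
    (hlip : ∀ i, ∀ y : H, LocallyLipschitzNear (f i) y)
    (x : H) (ε : ℝ) (hε : 0 < ε) (c : ℝ) (hc : c ∈ Set.Ioo (0 : ℝ) 1)
    (Ξ : Finset H)
    (vt : H) (hvmem : -vt ∈ convexHull ℝ (Ξ : Set H))
    (hvmin : ∀ w ∈ convexHull ℝ (Ξ : Set H), ‖vt‖ ≤ ‖w‖) (hv0 : vt ≠ 0)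
    (i : Fin k) (hviol : f i (x + (ε / ‖vt‖) • vt) > f i x - c * ε * ‖vt‖) :
    ∃ t' ∈ Set.Ioc (0 : ℝ) (ε / ‖vt‖), ∃ w' ∈ clarkeSubdiff (f i) (x + t' • vt),
      ⟪vt, w'⟫ > -c * ‖vt‖ ^ 2 ∧ w' ∈ multiSubdiff f ε x ∧
      w' ∉ convexHull ℝ (Ξ : Set H) := by
  have hnv : 0 < ‖vt‖ := norm_pos_iff.2 hv0
  obtain ⟨t, ht, w, hw, hangle⟩ := exists_mem_clarkeSubdiff_inner_gt (hlip i) (div_pos hε hnv)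
    (K := -c * ‖vt‖ ^ 2) (by field_simp at hviol ⊢; linarith)
  refine ⟨t, ht, w, hw, hangle, clarkeSubdiff_subset_multiSubdiff f i ?_ hw, fun hwΞ => ?_⟩
  · rw [mem_closedBall_iff_norm, add_sub_cancel_left, norm_smul, Real.norm_of_nonneg ht.1.le,
      ← le_div_iff₀ hnv]
    exact ht.2
  · have hsq := (convex_convexHull ℝ _).norm_sq_le_inner_of_forall_norm_le hvmem
      (fun z hz => (norm_neg vt).trans_le (hvmin z hz)) hwΞ
    rw [norm_neg, inner_neg_left] at hsq
    nlinarith [hc.2]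

/-- If the approximate descent direction obtained from a finite subset `Ξ ⊆ F_ε(x)` does not
yield sufficient decrease for some `f_i`, then a new subderivative `w' ∈ ∂f_i(x + t'·ṽ)`
violating the angle test exists, and `w' ∈ F_ε(x) \ convexHull Ξ`. -/
theorem stmt12 {H : Type*} [NormedAddCommGroup H] [InnerProductSpace ℝ H] [CompleteSpace H]
    {k : ℕ} (f : Fin k → H → ℝ)
    (hlip : ∀ i, ∀ y : H, LocallyLipschitzNear (f i) y)
    (x : H) (ε : ℝ) (hε : 0 < ε) (c : ℝ) (hc : c ∈ Set.Ioo (0 : ℝ) 1)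
    (Ξ : Finset H) (hΞne : Ξ.Nonempty) (hΞ : (Ξ : Set H) ⊆ multiSubdiff f ε x)
    (vt : H) (hvmem : -vt ∈ convexHull ℝ (Ξ : Set H))
    (hvmin : ∀ w ∈ convexHull ℝ (Ξ : Set H), ‖vt‖ ≤ ‖w‖) (hv0 : vt ≠ 0)
    (i : Fin k) (hviol : f i (x + (ε / ‖vt‖) • vt) > f i x - c * ε * ‖vt‖) :
    ∃ t' ∈ Set.Ioc (0 : ℝ) (ε / ‖vt‖), ∃ w' ∈ clarkeSubdiff (f i) (x + t' • vt),
      ⟪vt, w'⟫ > -c * ‖vt‖ ^ 2 ∧ w' ∈ multiSubdiff f ε x ∧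
      w' ∉ convexHull ℝ (Ξ : Set H) :=
  stmt12_general f hlip x ε hε c hc Ξ vt hvmem hvmin hv0 i hviol
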